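/- arXiv:2006.16909 — 8 statements merged into one kernel-verified Lean document; each statement's English description precedes it below -/
import Mathlib

section
/- Let (G,σ) be a best match graph explained by a leaf-colored tree (T,σ). Then none of the forbidden triples of (G,σ) is displayed by (T,σ). -/
/-- A rooted (phylogenetic) tree on leaf set `V`, encoded by its hierarchy of
clusters `L(T(v))`, `v ∈ V(T)`: a rooted tree on leaf set `V` corresponds
exactly to a family of nonempty, pairwise compatible subsets of `V` containing
all singletons and `V` itself.  Together with a coloring `σ : V → M` this is a
leaf-colored tree. -/
structure PhyloTree (V : Type) where
  clusters : Set (Set V)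
  compat : ∀ p ∈ clusters, ∀ q ∈ clusters, p ⊆ q ∨ q ⊆ p ∨ p ∩ q = ∅
  singleton_mem : ∀ v : V, {v} ∈ clusters
  univ_mem : Set.univ ∈ clusters
  nonempty_mem : ∀ p ∈ clusters, p.Nonempty

namespace PhyloTree

variable {V M : Type}

/-- The cluster `L(T(lca(x,y)))` of the last common ancestor of `x` and `y`;
for inner vertices `u,v` of a tree one has `u ⪯_T v ↔ L(T(u)) ⊆ L(T(v))`. -/
def lcaSet (T : PhyloTree V) (x y : V) : Set V :=
  ⋂₀ {p : Set V | p ∈ T.clusters ∧ x ∈ p ∧ y ∈ p}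

/-- `T` displays the triple `xy|z`, i.e. `lca(x,y) ≺ lca(x,z) = lca(y,z)`. -/
def Displays (T : PhyloTree V) (x y z : V) : Prop :=
  T.lcaSet x y ⊂ T.lcaSet x z ∧ T.lcaSet x z = T.lcaSet y z

/-- `y` is a best match of `x` in the leaf-colored tree `(T,σ)`. -/
def BestMatch (T : PhyloTree V) (σ : V → M) (x y : V) : Prop :=
  σ x ≠ σ y ∧ ∀ y' : V, σ y' = σ y → T.lcaSet x y ⊆ T.lcaSet x y'

end PhyloTree

variable {V M : Type}

/-- `(T,σ)` explains `(G,σ)`, i.e. `(G,σ) = G(T,σ)`. -/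
def Explains (T : PhyloTree V) (σ : V → M) (G : V → V → Prop) : Prop :=
  ∀ x y : V, G x y ↔ T.BestMatch σ x y

/-- `(G,σ)` is a best match graph. -/
def IsBMG (G : V → V → Prop) (σ : V → M) : Prop :=
  ∃ T : PhyloTree V, Explains T σ G

/-- The triple `xy|y'` is informative for `(G,σ)`. -/
def InformativeTriple (G : V → V → Prop) (σ : V → M) (x y y' : V) : Prop :=
  x ≠ y ∧ x ≠ y' ∧ y ≠ y' ∧ σ x ≠ σ y ∧ σ y = σ y' ∧ G x y ∧ ¬ G x y'

/-- The triple `xy|y'` is forbidden for `(G,σ)`. -/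
def ForbiddenTriple (G : V → V → Prop) (σ : V → M) (x y y' : V) : Prop :=
  x ≠ y ∧ x ≠ y' ∧ y ≠ y' ∧ σ x ≠ σ y ∧ σ y = σ y' ∧ G x y ∧ G x y'

/-- `(G,σ)` is sf-colored: `σ` is proper and every vertex has an out-neighbor
of every color present in the graph other than its own. -/
def SfColored (G : V → V → Prop) (σ : V → M) : Prop :=
  (∀ x y : V, G x y → σ x ≠ σ y) ∧
  ∀ (x : V) (s : M), (∃ v : V, σ v = s) → s ≠ σ x → ∃ y : V, σ y = s ∧ G x y

theorem PhyloTree.BestMatch.not_displays {T : PhyloTree V} {σ : V → M} {x y y' : V}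
    (h : T.BestMatch σ x y') (hσ : σ y = σ y') : ¬ T.Displays x y y' :=
  fun hd => hd.1.not_subset (h.2 y hσ)

theorem forbidden_triples_not_displayed_general
    (G : V → V → Prop) (σ : V → M) (T : PhyloTree V)
    (hT : Explains T σ G) :
    ∀ x y y' : V, ForbiddenTriple G σ x y y' → ¬ T.Displays x y y' := by
  rintro x y y' ⟨-, -, -, -, hσ, -, hxy'⟩
  exact ((hT x y').mp hxy').not_displays hσ

/-- If `(G,σ)` is a BMG explained by `(T,σ)`, then none of the
forbidden triples of `(G,σ)` is displayed by `(T,σ)`. -/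
theorem forbidden_triples_not_displayed [Fintype V]
    (G : V → V → Prop) (σ : V → M) (T : PhyloTree V)
    (hT : Explains T σ G) :
    ∀ x y y' : V, ForbiddenTriple G σ x y y' → ¬ T.Displays x y y' :=
  forbidden_triples_not_displayed_general G σ T hT
end

section
/- Let (G,σ) be an sf-colored digraph with vertex set L. Then for every leaf-colored tree (T,σ) on leaf set L that displays all informative triples of (G,σ), the arc set of the best match graph G(T,σ) is a subset of the arc set of G. -/
variable {V M : Type}

theorem PhyloTree.Displays.not_bestMatch {T : PhyloTree V} {σ : V → M} {x y y' : V}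
    (hd : T.Displays x y' y) (hc : σ y' = σ y) : ¬ T.BestMatch σ x y :=
  fun hbm => hd.1.not_subset (hbm.2 y' hc)

theorem SfColored.exists_informativeTriple {G : V → V → Prop} {σ : V → M} (hsf : SfColored G σ)
    {x y : V} (hne : σ x ≠ σ y) (hxy : ¬ G x y) :
    ∃ y', σ y' = σ y ∧ InformativeTriple G σ x y' y := by
  obtain ⟨y', hc, hG⟩ := hsf.2 x (σ y) ⟨y, rfl⟩ hne.symm
  refine ⟨y', hc, ?_, ?_, ?_, hc ▸ hne, hc, hG, hxy⟩
  · exact fun h => hsf.1 x y' hG (congrArg σ h)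
  · exact fun h => hne (congrArg σ h)
  · exact fun h => hxy (h ▸ hG)

theorem bmg_of_tree_subgraph_general
    (G : V → V → Prop) (σ : V → M) (hsf : SfColored G σ)
    (T : PhyloTree V)
    (hdisp : ∀ x y y' : V, InformativeTriple G σ x y y' → T.Displays x y y') :
    ∀ x y : V, T.BestMatch σ x y → G x y := by
  intro x y hbm
  by_contra hxy
  obtain ⟨y', hc, hinf⟩ := hsf.exists_informativeTriple hbm.1 hxy
  exact (hdisp x y' y hinf).not_bestMatch hc hbm

/-- If `(G,σ)` is sf-colored and `(T,σ)` displays all informative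
triples of `(G,σ)`, then every arc of `G(T,σ)` (best match) is an arc of `G`. -/
theorem bmg_of_tree_subgraph [Fintype V]
    (G : V → V → Prop) (σ : V → M) (hsf : SfColored G σ)
    (T : PhyloTree V)
    (hdisp : ∀ x y y' : V, InformativeTriple G σ x y y' → T.Displays x y y') :
    ∀ x y : V, T.BestMatch σ x y → G x y :=
  bmg_of_tree_subgraph_general G σ hsf T hdisp
end

section
/- Let (G,σ) be an sf-colored digraph with vertex set L. A leaf-colored tree (T,σ) on leaf set L explains (G,σ) if and only if (T,σ) displays all informative triples of (G,σ) and none of the forbidden triples of (G,σ). In this case, (G,σ) is a best match graph. -/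
variable {V M : Type}

/-!
In a hierarchy of clusters, the clusters through a leaf form a chain, so the triple `xy|z` is
displayed exactly when `lca(x,y) ⊊ lca(x,z)`. For `(T,σ)` explaining `G`, an arc `(x,y)` with a
non-arc `(x,y')` of the same colour forces strict inclusion (otherwise `y'` would be a best match
too), and two arcs of the same colour force equality. Conversely, agreement makes every
out-neighbour a best match by comparing it with each same-coloured leaf, and every best match `y`
an out-neighbour: the sf-property supplies an out-neighbour `y'` of colour `σ y`, and were `(x,y)`
missing, the informative triple `xy'|y` would put `y` strictly further from `x` than `y'`.
-/

namespace PhyloTree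

variable (T : PhyloTree V)

theorem subset_or_subset_of_mem_of_mem {p q : Set V} (hp : p ∈ T.clusters)
    (hq : q ∈ T.clusters) {x : V} (hxp : x ∈ p) (hxq : x ∈ q) : p ⊆ q ∨ q ⊆ p := by
  rcases T.compat p hp q hq with h | h | h
  · exact .inl h
  · exact .inr h
  · exact (Set.eq_empty_iff_forall_notMem.mp h x ⟨hxp, hxq⟩).elim

theorem lcaSet_subset_of_mem {p : Set V} (hp : p ∈ T.clusters) {x y : V} (hx : x ∈ p)
    (hy : y ∈ p) : T.lcaSet x y ⊆ p :=
  Set.sInter_subset_of_mem ⟨hp, hx, hy⟩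

variable [Finite V]

theorem isLeast_lcaSet (x y : V) :
    IsLeast {p | p ∈ T.clusters ∧ x ∈ p ∧ y ∈ p} (T.lcaSet x y) := by
  obtain ⟨p, hp⟩ := (Set.toFinite {p | p ∈ T.clusters ∧ x ∈ p ∧ y ∈ p}).exists_minimal
    ⟨Set.univ, T.univ_mem, trivial, trivial⟩
  -- the clusters containing `x` form a chain, so a minimal one is least
  have hleast : IsLeast {p | p ∈ T.clusters ∧ x ∈ p ∧ y ∈ p} p :=
    ⟨hp.prop, fun q hq =>
      (T.subset_or_subset_of_mem_of_mem hp.prop.1 hq.1 hp.prop.2.1 hq.2.1).elim id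
        fun hqp => (hp.eq_of_subset hq hqp).ge⟩
  rwa [lcaSet, ← Set.sInf_eq_sInter, hleast.csInf_eq]

theorem lcaSet_mem_clusters (x y : V) : T.lcaSet x y ∈ T.clusters :=
  (T.isLeast_lcaSet x y).1.1

theorem left_mem_lcaSet (x y : V) : x ∈ T.lcaSet x y :=
  (T.isLeast_lcaSet x y).1.2.1

theorem right_mem_lcaSet (x y : V) : y ∈ T.lcaSet x y :=
  (T.isLeast_lcaSet x y).1.2.2

theorem lcaSet_subset_or_subset (x y z : V) :
    T.lcaSet x y ⊆ T.lcaSet x z ∨ T.lcaSet x z ⊆ T.lcaSet x y :=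
  T.subset_or_subset_of_mem_of_mem (T.lcaSet_mem_clusters x y) (T.lcaSet_mem_clusters x z)
    (T.left_mem_lcaSet x y) (T.left_mem_lcaSet x z)

theorem lcaSet_subset_of_not_ssubset {x y z : V} (h : ¬ T.lcaSet x z ⊂ T.lcaSet x y) :
    T.lcaSet x y ⊆ T.lcaSet x z := by
  rcases T.lcaSet_subset_or_subset x y z with hyz | hzy
  · exact hyz
  · exact ((Set.eq_or_ssubset_of_subset hzy).resolve_right h).ge

theorem lcaSet_eq_of_ssubset {x y z : V} (h : T.lcaSet x y ⊂ T.lcaSet x z) :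
    T.lcaSet x z = T.lcaSet y z := by
  have hyz : T.lcaSet y z ⊆ T.lcaSet x z :=
    T.lcaSet_subset_of_mem (T.lcaSet_mem_clusters x z) (h.subset (T.right_mem_lcaSet x y))
      (T.right_mem_lcaSet x z)
  have hx : x ∈ T.lcaSet y z := by
    rcases T.subset_or_subset_of_mem_of_mem (T.lcaSet_mem_clusters y z)
        (T.lcaSet_mem_clusters x y) (T.left_mem_lcaSet y z) (T.right_mem_lcaSet x y) with
      hzy | hxy
    · exact absurd (T.lcaSet_subset_of_mem (T.lcaSet_mem_clusters x y) (T.left_mem_lcaSet x y)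
        (hzy (T.right_mem_lcaSet y z))) h.not_subset
    · exact hxy (T.left_mem_lcaSet x y)
  exact (T.lcaSet_subset_of_mem (T.lcaSet_mem_clusters y z) hx (T.right_mem_lcaSet y z)).antisymm
    hyz

theorem displays_iff_lcaSet_ssubset {x y z : V} :
    T.Displays x y z ↔ T.lcaSet x y ⊂ T.lcaSet x z :=
  ⟨And.left, fun h => ⟨h, T.lcaSet_eq_of_ssubset h⟩⟩

end PhyloTree

def Agrees (T : PhyloTree V) (σ : V → M) (G : V → V → Prop) : Prop :=
  (∀ x y y' : V, InformativeTriple G σ x y y' → T.Displays x y y') ∧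
    (∀ x y y' : V, ForbiddenTriple G σ x y y' → ¬ T.Displays x y y')

section

variable {T : PhyloTree V} {σ : V → M} {G : V → V → Prop} [Finite V]

theorem Explains.agrees (hE : Explains T σ G) : Agrees T σ G := by
  refine ⟨?informative, ?forbidden⟩
  · rintro x y y' ⟨-, -, -, -, hcol, hxy, hxy'⟩
    obtain ⟨hσ, hbest⟩ := (hE x y).mp hxy
    refine T.displays_iff_lcaSet_ssubset.mpr ⟨hbest y' hcol.symm, fun hy'y => hxy' ?_⟩
    -- `lca(x,y') ⊆ lca(x,y)` makes `y'` a best match of `x` as well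
    exact (hE x y').mpr ⟨hcol ▸ hσ, fun y'' hy'' => hy'y.trans (hbest y'' (hy''.trans hcol.symm))⟩
  · rintro x y y' ⟨-, -, -, -, hcol, -, hxy'⟩ hdisp
    exact (T.displays_iff_lcaSet_ssubset.mp hdisp).not_subset (((hE x y').mp hxy').2 y hcol)

theorem Agrees.lcaSet_subset_of_adj (hA : Agrees T σ G) (hsf : SfColored G σ) {x y y' : V}
    (hxy : G x y) (hy' : σ y' = σ y) : T.lcaSet x y ⊆ T.lcaSet x y' := by
  have hσ : σ x ≠ σ y := hsf.1 x y hxy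
  have hxy_ne : x ≠ y := ne_of_apply_ne σ hσ
  have hxy'_ne : x ≠ y' := ne_of_apply_ne σ (hy' ▸ hσ)
  by_cases hyy' : y' = y
  · rw [hyy']
  by_cases hxy' : G x y'
  · refine T.lcaSet_subset_of_not_ssubset fun hss => hA.2 x y' y ?_
      (T.displays_iff_lcaSet_ssubset.mpr hss)
    exact ⟨hxy'_ne, hxy_ne, hyy', hy' ▸ hσ, hy', hxy', hxy⟩
  · exact (hA.1 x y y' ⟨hxy_ne, hxy'_ne, Ne.symm hyy', hσ, hy'.symm, hxy, hxy'⟩).1.subset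

theorem Agrees.adj_of_bestMatch (hA : Agrees T σ G) (hsf : SfColored G σ) {x y : V}
    (h : T.BestMatch σ x y) : G x y := by
  by_contra hxy
  obtain ⟨y', hy', hxy'⟩ := hsf.2 x (σ y) ⟨y, rfl⟩ (Ne.symm h.1)
  have hdisp : T.Displays x y' y :=
    hA.1 x y' y ⟨ne_of_apply_ne σ (hy' ▸ h.1), ne_of_apply_ne σ h.1,
      fun hy'y => hxy (hy'y ▸ hxy'), hy' ▸ h.1, hy', hxy', hxy⟩
  exact (T.displays_iff_lcaSet_ssubset.mp hdisp).not_subset (h.2 y' hy')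

theorem Agrees.explains (hA : Agrees T σ G) (hsf : SfColored G σ) : Explains T σ G :=
  fun _ _ => ⟨fun hxy => ⟨hsf.1 _ _ hxy, fun _ hy' => hA.lcaSet_subset_of_adj hsf hxy hy'⟩,
    hA.adj_of_bestMatch hsf⟩

end

/-- For sf-colored `(G,σ)`, a tree `(T,σ)` on the vertex set
explains `(G,σ)` iff it displays all informative and none of the forbidden
triples of `(G,σ)`; in this case `(G,σ)` is a BMG. -/
theorem explains_iff_agrees [Fintype V]
    (G : V → V → Prop) (σ : V → M) (hsf : SfColored G σ)
    (T : PhyloTree V) :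
    (Explains T σ G ↔
      ((∀ x y y' : V, InformativeTriple G σ x y y' → T.Displays x y y') ∧
       (∀ x y y' : V, ForbiddenTriple G σ x y y' → ¬ T.Displays x y y'))) ∧
    (((∀ x y y' : V, InformativeTriple G σ x y y' → T.Displays x y y') ∧
      (∀ x y y' : V, ForbiddenTriple G σ x y y' → ¬ T.Displays x y y')) →
        IsBMG G σ) := by
  have hiff : Explains T σ G ↔ Agrees T σ G := ⟨Explains.agrees, fun hA => hA.explains hsf⟩
  exact ⟨hiff, fun hA => ⟨T, hiff.mpr hA⟩⟩
end

section
/- Let (G,σ) be an sf-colored digraph with nonempty vertex set, and let L' be the union of the leaf sets of all informative and forbidden triples of (G,σ). Then the following three statements are equivalent: (1) L' = V(G); (2) the union of the sets of informative and forbidden triples of (G,σ) is nonempty; (3) (G,σ) uses at least two colors and contains two vertices of the same color. -/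
variable {V M : Type}

/-
A triple needs a vertex `x` with an out-neighbor `y` of another color and a third vertex `y'`
of the color of `y`; conversely, given two colors and a repeated color, sf-coloring supplies
such a triple through any prescribed vertex `w`. If `w` has a same-colored partner `p`, take
`x` of another color and its out-neighbor `y` of color `σ w`: the triple is `x y|w` if `y ≠ w`
and `x w|p` otherwise. If `w` is alone in its color class, then `σ w` differs from the
repeated color, and `w` itself serves as `x`.
-/

section Triples

variable {G : V → V → Prop} {σ : V → M}

theorem informativeTriple_or_forbiddenTriple_of_adj {x y y' : V} (hxy : σ x ≠ σ y)
    (hyy' : σ y = σ y') (hne : y ≠ y') (hG : G x y) :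
    InformativeTriple G σ x y y' ∨ ForbiddenTriple G σ x y y' := by
  have hxy' : σ x ≠ σ y' := hyy' ▸ hxy
  by_cases hG' : G x y'
  · exact Or.inr ⟨ne_of_apply_ne σ hxy, ne_of_apply_ne σ hxy', hne, hxy, hyy', hG, hG'⟩
  · exact Or.inl ⟨ne_of_apply_ne σ hxy, ne_of_apply_ne σ hxy', hne, hxy, hyy', hG, hG'⟩

theorem exists_ne_color_and_eq_color_of_triple {x y y' : V}
    (h : InformativeTriple G σ x y y' ∨ ForbiddenTriple G σ x y y') :
    (∃ u v : V, σ u ≠ σ v) ∧ (∃ u v : V, u ≠ v ∧ σ u = σ v) := by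
  obtain ⟨-, -, hne, hxy, hyy', -⟩ | ⟨-, -, hne, hxy, hyy', -⟩ := h <;>
    exact ⟨⟨x, y, hxy⟩, ⟨y, y', hne, hyy'⟩⟩

theorem SfColored.exists_triple_of_ne_color (hsf : SfColored G σ) {x w p : V}
    (hxw : σ x ≠ σ w) (hpw : p ≠ w) (hσ : σ p = σ w) :
    ∃ y y' : V, (InformativeTriple G σ x y y' ∨ ForbiddenTriple G σ x y y') ∧
      (w = y ∨ w = y') := by
  obtain ⟨y, hyw, hG⟩ := hsf.2 x (σ w) ⟨w, rfl⟩ (Ne.symm hxw)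
  rcases eq_or_ne y w with rfl | hyw'
  · exact ⟨y, p, informativeTriple_or_forbiddenTriple_of_adj hxw hσ.symm hpw.symm hG,
      Or.inl rfl⟩
  · exact ⟨y, w, informativeTriple_or_forbiddenTriple_of_adj (hyw ▸ hxw) hyw hyw' hG,
      Or.inr rfl⟩

theorem SfColored.exists_triple_mem (hsf : SfColored G σ)
    (hcolors : (∃ u v : V, σ u ≠ σ v) ∧ (∃ u v : V, u ≠ v ∧ σ u = σ v)) (w : V) :
    ∃ x y y' : V, (InformativeTriple G σ x y y' ∨ ForbiddenTriple G σ x y y') ∧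
      (w = x ∨ w = y ∨ w = y') := by
  by_cases hpart : ∃ p, p ≠ w ∧ σ p = σ w
  · obtain ⟨p, hpw, hσp⟩ := hpart
    obtain ⟨x, hxw⟩ : ∃ x, σ x ≠ σ w := by
      obtain ⟨a, b, hab⟩ := hcolors.1
      by_cases ha : σ a = σ w
      · exact ⟨b, fun hb => hab (ha.trans hb.symm)⟩
      · exact ⟨a, ha⟩
    obtain ⟨y, y', ht, hw⟩ := hsf.exists_triple_of_ne_color hxw hpw hσp
    exact ⟨x, y, y', ht, Or.inr hw⟩
  · push Not at hpart
    obtain ⟨u, v, huv, hσuv⟩ := hcolors.2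
    have hwv : σ w ≠ σ v := by
      intro h
      rcases eq_or_ne v w with rfl | hvw
      · exact hpart u huv hσuv
      · exact hpart v hvw h.symm
    obtain ⟨y, y', ht, -⟩ := hsf.exists_triple_of_ne_color hwv huv hσuv
    exact ⟨w, y, y', ht, Or.inl rfl⟩

end Triples

theorem triple_leaves_cover_iff_general [Nonempty V]
    (G : V → V → Prop) (σ : V → M) (hsf : SfColored G σ) :
    ((∀ v : V, ∃ x y y' : V,
        (InformativeTriple G σ x y y' ∨ ForbiddenTriple G σ x y y') ∧
        (v = x ∨ v = y ∨ v = y')) ↔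
      (∃ x y y' : V, InformativeTriple G σ x y y' ∨ ForbiddenTriple G σ x y y')) ∧
    ((∃ x y y' : V, InformativeTriple G σ x y y' ∨ ForbiddenTriple G σ x y y') ↔
      ((∃ u v : V, σ u ≠ σ v) ∧ (∃ u v : V, u ≠ v ∧ σ u = σ v))) := by
  refine ⟨⟨fun hcover => ?_, fun ⟨_, _, _, ht⟩ => ?_⟩,
    ⟨fun ⟨_, _, _, ht⟩ => exists_ne_color_and_eq_color_of_triple ht, fun hcolors => ?_⟩⟩
  · obtain ⟨x, y, y', ht, -⟩ := hcover (Classical.arbitrary V)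
    exact ⟨x, y, y', ht⟩
  · exact hsf.exists_triple_mem (exists_ne_color_and_eq_color_of_triple ht)
  · obtain ⟨x, y, y', ht, -⟩ := hsf.exists_triple_mem hcolors (Classical.arbitrary V)
    exact ⟨x, y, y', ht⟩

/-- For sf-colored `(G,σ)` with nonempty vertex set, the
following are equivalent: (1) every vertex occurs in some informative or
forbidden triple; (2) some informative or forbidden triple exists;
(3) at least two colors are used and two vertices share a color. -/
theorem triple_leaves_cover_iff [Fintype V] [Nonempty V]
    (G : V → V → Prop) (σ : V → M) (hsf : SfColored G σ) :
    ((∀ v : V, ∃ x y y' : V,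
        (InformativeTriple G σ x y y' ∨ ForbiddenTriple G σ x y y') ∧
        (v = x ∨ v = y ∨ v = y')) ↔
      (∃ x y y' : V, InformativeTriple G σ x y y' ∨ ForbiddenTriple G σ x y y')) ∧
    ((∃ x y y' : V, InformativeTriple G σ x y y' ∨ ForbiddenTriple G σ x y y') ↔
      ((∃ u v : V, σ u ≠ σ v) ∧ (∃ u v : V, u ≠ v ∧ σ u = σ v))) :=
  triple_leaves_cover_iff_general G σ hsf
end

section
/- Let (G,σ) be an sf-colored digraph with nonempty vertex set that has no informative triple and no forbidden triple. Then (G,σ) is a best match graph, and it is explained by every leaf-colored tree on the vertex set V(G) with coloring σ. -/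
variable {V M : Type}

/-!
Without informative and forbidden triples, an out-neighbor `y` of `x` is the only vertex of
its color (a second one would form an informative or a forbidden triple with `x` and `y`).
Hence, in an sf-colored graph, the arcs leaving `x` go to exactly the vertices of other colors
that are unique in their color class. In any tree such a vertex is a best match of `x`, since
there is no competitor, and a best match `y` of `x` is the out-neighbor of color `σ y` that the
sf-coloring provides. The star tree shows that such a tree exists.
-/

theorem eq_of_adj_of_color_eq {G : V → V → Prop} {σ : V → M}
    (hnoInf : ∀ x y y' : V, ¬ InformativeTriple G σ x y y')
    (hnoForb : ∀ x y y' : V, ¬ ForbiddenTriple G σ x y y')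
    {x y y' : V} (hxy : σ x ≠ σ y) (hy' : σ y' = σ y) (hG : G x y) : y' = y := by
  by_contra hne
  have hxy' : σ x ≠ σ y' := hy' ▸ hxy
  have hx_ne_y : x ≠ y := fun h => hxy (h ▸ rfl)
  have hx_ne_y' : x ≠ y' := fun h => hxy' (h ▸ rfl)
  by_cases hG' : G x y'
  · exact hnoForb x y y' ⟨hx_ne_y, hx_ne_y', Ne.symm hne, hxy, hy'.symm, hG, hG'⟩
  · exact hnoInf x y y' ⟨hx_ne_y, hx_ne_y', Ne.symm hne, hxy, hy'.symm, hG, hG'⟩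

theorem explains_of_adj_unique_color {G : V → V → Prop} {σ : V → M} (hsf : SfColored G σ)
    (hunique : ∀ x y y' : V, σ x ≠ σ y → σ y' = σ y → G x y → y' = y)
    (T : PhyloTree V) : Explains T σ G := by
  intro x y
  constructor
  · intro hG
    have hxy := hsf.1 x y hG
    refine ⟨hxy, fun y' hy' => ?_⟩
    rw [hunique x y y' hxy hy' hG]
  · rintro ⟨hxy, -⟩
    obtain ⟨z, hz, hGz⟩ := hsf.2 x (σ y) ⟨y, rfl⟩ (Ne.symm hxy)
    rwa [hunique x z y (hz ▸ hxy) hz.symm hGz]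

namespace PhyloTree

def star (V : Type) [Nonempty V] : PhyloTree V where
  clusters := Set.range (fun v : V => ({v} : Set V)) ∪ {Set.univ}
  compat := by
    rintro p (⟨v, rfl⟩ | rfl) q (⟨w, rfl⟩ | rfl)
    · by_cases h : v = w
      · exact Or.inl (by rw [h])
      · exact Or.inr (Or.inr (Set.singleton_inter_eq_empty.mpr h))
    · exact Or.inl (Set.subset_univ _)
    · exact Or.inr (Or.inl (Set.subset_univ _))
    · exact Or.inl subset_rfl
  singleton_mem v := Or.inl ⟨v, rfl⟩
  univ_mem := Or.inr rfl
  nonempty_mem := by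
    rintro p (⟨v, rfl⟩ | rfl)
    · exact Set.singleton_nonempty v
    · exact Set.univ_nonempty

end PhyloTree

theorem bmg_of_no_triples_general [Nonempty V]
    (G : V → V → Prop) (σ : V → M) (hsf : SfColored G σ)
    (hnoInf : ∀ x y y' : V, ¬ InformativeTriple G σ x y y')
    (hnoForb : ∀ x y y' : V, ¬ ForbiddenTriple G σ x y y') :
    IsBMG G σ ∧ ∀ T : PhyloTree V, Explains T σ G := by
  have hexplains : ∀ T : PhyloTree V, Explains T σ G :=
    explains_of_adj_unique_color hsf fun _ _ _ hxy hy' hG =>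
      eq_of_adj_of_color_eq hnoInf hnoForb hxy hy' hG
  exact ⟨⟨PhyloTree.star V, hexplains _⟩, hexplains⟩

/-- An sf-colored graph with nonempty vertex set having no
informative and no forbidden triple is a BMG that is explained by every
leaf-colored tree on its vertex set. -/
theorem bmg_of_no_triples [Fintype V] [Nonempty V]
    (G : V → V → Prop) (σ : V → M) (hsf : SfColored G σ)
    (hnoInf : ∀ x y y' : V, ¬ InformativeTriple G σ x y y')
    (hnoForb : ∀ x y y' : V, ¬ ForbiddenTriple G σ x y y') :
    IsBMG G σ ∧ ∀ T : PhyloTree V, Explains T σ G :=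
  bmg_of_no_triples_general G σ hsf hnoInf hnoForb
end

section
/- Let (G,σ) be a properly 2-colored digraph that contains no induced F1-graph. Then (G,σ) satisfies condition (N1): for any two thinness classes α and β with α∩N(β)=β∩N(α)=∅, it holds that N(α)∩N(N(β)) = N(β)∩N(N(α)) = ∅. -/
variable {V M : Type}

/-- Out-neighborhood `N(x)`. -/
def outN (G : V → V → Prop) (x : V) : Set V := {y | G x y}

/-- In-neighborhood `N⁻(x)`. -/
def inN (G : V → V → Prop) (x : V) : Set V := {y | G y x}

/-- Out-neighborhood of a set of vertices. -/
def outNS (G : V → V → Prop) (A : Set V) : Set V := {y | ∃ x ∈ A, G x y}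

/-- The thinness class of the vertex `a`: all vertices with the same out- and
in-neighborhood as `a`. -/
def thinClass (G : V → V → Prop) (a : V) : Set V :=
  {v | outN G v = outN G a ∧ inN G v = inN G a}

/-- `(G,σ)` contains an induced F1-graph. -/
def HasF1 (G : V → V → Prop) (σ : V → M) : Prop :=
  ∃ x1 x2 y1 y2 : V,
    x1 ≠ x2 ∧ y1 ≠ y2 ∧
    σ x1 = σ x2 ∧ σ y1 = σ y2 ∧ σ x1 ≠ σ y1 ∧
    ¬ G x1 x2 ∧ ¬ G x2 x1 ∧ ¬ G y1 y2 ∧ ¬ G y2 y1 ∧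
    G x1 y1 ∧ G y2 x2 ∧ G y1 x2 ∧ ¬ G x1 y2 ∧ ¬ G y2 x1

/-- `(G,σ)` contains an induced F2-graph. -/
def HasF2 (G : V → V → Prop) (σ : V → M) : Prop :=
  ∃ x1 x2 y1 y2 : V,
    x1 ≠ x2 ∧ y1 ≠ y2 ∧
    σ x1 = σ x2 ∧ σ y1 = σ y2 ∧ σ x1 ≠ σ y1 ∧
    ¬ G x1 x2 ∧ ¬ G x2 x1 ∧ ¬ G y1 y2 ∧ ¬ G y2 y1 ∧
    G x1 y1 ∧ G y1 x2 ∧ G x2 y2 ∧ ¬ G x1 y2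

/-- `(G,σ)` contains an induced F3-graph. -/
def HasF3 (G : V → V → Prop) (σ : V → M) : Prop :=
  ∃ x1 x2 y1 y2 y3 : V,
    x1 ≠ x2 ∧ y1 ≠ y2 ∧ y1 ≠ y3 ∧ y2 ≠ y3 ∧
    σ x1 = σ x2 ∧ σ y1 = σ y2 ∧ σ y2 = σ y3 ∧ σ x1 ≠ σ y1 ∧
    ¬ G x1 x2 ∧ ¬ G x2 x1 ∧ ¬ G y1 y2 ∧ ¬ G y2 y1 ∧
    ¬ G y1 y3 ∧ ¬ G y3 y1 ∧ ¬ G y2 y3 ∧ ¬ G y3 y2 ∧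
    G x1 y1 ∧ G x2 y2 ∧ G x1 y3 ∧ G x2 y3 ∧ ¬ G x1 y2 ∧ ¬ G x2 y1

/-! If `z ∈ N(a)` is reached as `b → w → z` while `a` and `b` are non-adjacent, then
with two colours `σ b = σ z` and `σ w = σ a`, and `b, z, w, a` span an induced F1-graph. -/

theorem Bool.eq_of_ne_of_ne {x y z : Bool} (hx : x ≠ z) (hy : y ≠ z) : x = y :=
  (Bool.eq_not_of_ne hx).trans (Bool.eq_not_of_ne hy).symm

section

variable {G : V → V → Prop}

theorem mem_thinClass_self (a : V) : a ∈ thinClass G a := ⟨rfl, rfl⟩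

theorem not_adj_of_thinClass_inter_outN_eq_empty {a b : V} (h : thinClass G a ∩ outN G b = ∅) :
    ¬ G b a :=
  fun hba => (Set.eq_empty_iff_forall_notMem.mp h) a ⟨mem_thinClass_self a, hba⟩

variable {σ : V → Bool}

theorem hasF1_of_path_of_not_adj (hproper : ∀ x y : V, G x y → σ x ≠ σ y) {a b w z : V}
    (hbw : G b w) (hwz : G w z) (haz : G a z) (hab : ¬ G a b) (hba : ¬ G b a) : HasF1 G σ := by
  have hbz : σ b = σ z := Bool.eq_of_ne_of_ne (hproper b w hbw) (hproper w z hwz).symm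
  have hwa : σ w = σ a := Bool.eq_of_ne_of_ne (hproper w z hwz) (hproper a z haz)
  refine ⟨b, z, w, a, ?_, ?_, hbz, hwa, hproper b w hbw, fun h => hproper b z h hbz,
    fun h => hproper z b h hbz.symm, fun h => hproper w a h hwa, fun h => hproper a w h hwa.symm,
    hbw, haz, hwz, hba, hab⟩
  · rintro rfl
    exact hab haz
  · rintro rfl
    exact hba hbw

theorem outN_inter_outNS_outN_eq_empty (hproper : ∀ x y : V, G x y → σ x ≠ σ y)
    (hF1 : ¬ HasF1 G σ) {a b : V} (hab : ¬ G a b) (hba : ¬ G b a) :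
    outN G a ∩ outNS G (outN G b) = ∅ := by
  refine Set.eq_empty_iff_forall_notMem.mpr ?_
  rintro z ⟨haz, w, hbw, hwz⟩
  exact hF1 (hasF1_of_path_of_not_adj hproper hbw hwz haz hab hba)

end

theorem N1_of_no_F1_general (G : V → V → Prop) (σ : V → Bool)
    (hproper : ∀ x y : V, G x y → σ x ≠ σ y)
    (hF1 : ¬ HasF1 G σ) :
    ∀ a b : V,
      thinClass G a ∩ outN G b = ∅ → thinClass G b ∩ outN G a = ∅ →
      outN G a ∩ outNS G (outN G b) = ∅ ∧ outN G b ∩ outNS G (outN G a) = ∅ := by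
  intro a b hab hba
  have hnba : ¬ G b a := not_adj_of_thinClass_inter_outN_eq_empty hab
  have hnab : ¬ G a b := not_adj_of_thinClass_inter_outN_eq_empty hba
  exact ⟨outN_inter_outNS_outN_eq_empty hproper hF1 hnab hnba,
    outN_inter_outNS_outN_eq_empty hproper hF1 hnba hnab⟩

/-- A properly 2-colored digraph without induced F1-graph
satisfies (N1). -/
theorem N1_of_no_F1 [Fintype V] (G : V → V → Prop) (σ : V → Bool)
    (hproper : ∀ x y : V, G x y → σ x ≠ σ y)
    (hsurj : Function.Surjective σ)
    (hF1 : ¬ HasF1 G σ) :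
    ∀ a b : V,
      thinClass G a ∩ outN G b = ∅ → thinClass G b ∩ outN G a = ∅ →
      outN G a ∩ outNS G (outN G b) = ∅ ∧ outN G b ∩ outNS G (outN G a) = ∅ :=
  N1_of_no_F1_general G σ hproper hF1
end

section
/- Let (G,σ) be a properly 2-colored digraph that contains no induced F2-graph. Then (G,σ) satisfies condition (N2): for every thinness class α, N(N(N(α))) ⊆ N(α). -/
variable {V M : Type}

/-! A counterexample to (N2) is a path `a → y₁ → x₂ → y₂` with `¬ G a y₂`. Since the colours
alternate along an arc and there are only two of them, `a, x₂` share a colour, as do `y₁, y₂`;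
so both pairs are non-adjacent and the four vertices span an induced F2-graph. -/

theorem Bool.eq_of_ne_of_ne_s10 {a b c : Bool} (hab : a ≠ b) (hbc : b ≠ c) : a = c := by
  revert a b c; decide

theorem hasF2_of_path {G : V → V → Prop} {σ : V → Bool} (hproper : ∀ x y, G x y → σ x ≠ σ y)
    {x₁ y₁ x₂ y₂ : V} (h₁ : G x₁ y₁) (h₂ : G y₁ x₂) (h₃ : G x₂ y₂) (hn : ¬ G x₁ y₂) :
    HasF2 G σ := by
  have hx : σ x₁ = σ x₂ := Bool.eq_of_ne_of_ne_s10 (hproper _ _ h₁) (hproper _ _ h₂)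
  have hy : σ y₁ = σ y₂ := Bool.eq_of_ne_of_ne_s10 (hproper _ _ h₂) (hproper _ _ h₃)
  refine ⟨x₁, x₂, y₁, y₂, ?_, ?_, hx, hy, hproper _ _ h₁, fun h => hproper _ _ h hx,
    fun h => hproper _ _ h hx.symm, fun h => hproper _ _ h hy, fun h => hproper _ _ h hy.symm,
    h₁, h₂, h₃, hn⟩
  · rintro rfl
    exact hn h₃
  · rintro rfl
    exact hn h₁

theorem N2_of_no_F2_general (G : V → V → Prop) (σ : V → Bool)
    (hproper : ∀ x y : V, G x y → σ x ≠ σ y)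
    (hF2 : ¬ HasF2 G σ) :
    ∀ a : V, outNS G (outNS G (outN G a)) ⊆ outN G a := by
  rintro a y₂ ⟨x₂, ⟨y₁, h₁, h₂⟩, h₃⟩
  by_contra hn
  exact hF2 (hasF2_of_path hproper h₁ h₂ h₃ hn)

/-- A properly 2-colored digraph without induced F2-graph
satisfies (N2). -/
theorem N2_of_no_F2 [Fintype V] (G : V → V → Prop) (σ : V → Bool)
    (hproper : ∀ x y : V, G x y → σ x ≠ σ y)
    (hsurj : Function.Surjective σ)
    (hF2 : ¬ HasF2 G σ) :
    ∀ a : V, outNS G (outNS G (outN G a)) ⊆ outN G a :=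
  N2_of_no_F2_general G σ hproper hF2
end

section
/- Let (G,σ) be a 2-colored bi-cluster graph with at least two connected components, let 𝔍 be its set of connected components, and fix one component X ∈ 𝔍. Let (G',σ) be obtained from (G,σ) by adding all arcs (x,y) with x ∈ X, y a vertex of a component other than X, and σ(x)≠σ(y). Then (G',σ) is a best match graph. -/
variable {V M : Type}

/-- Weak connectivity in a digraph. -/
def WConn (G : V → V → Prop) : V → V → Prop :=
  Relation.ReflTransGen (fun u v => G u v ∨ G v u)

/-- The (weakly) connected component of `x`. -/
def component (G : V → V → Prop) (x : V) : Set V := {v | WConn G x v}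

/-- `C` is a bi-clique of `(G,σ)`: exactly two colors occur in `C` and, inside
`C`, arcs are exactly the pairs of differently colored vertices. -/
def IsBiClique (G : V → V → Prop) (σ : V → M) (C : Set V) : Prop :=
  (∃ s t : M, s ≠ t ∧ σ '' C = {s, t}) ∧
  ∀ x ∈ C, ∀ y ∈ C, (G x y ↔ σ x ≠ σ y)

/-- `(G,σ)` is a bi-cluster graph: every connected component is a bi-clique. -/
def IsBiclusterGraph (G : V → V → Prop) (σ : V → M) : Prop :=
  ∀ x : V, IsBiClique G σ (component G x)

/-!
The explaining tree has, below its root, the leaves of the distinguished component `X` and one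
inner vertex for each other component, holding the leaves of that component. Every component of
a 2-colored bi-cluster graph contains both colors, so the best matches of a vertex outside `X`
are exactly the differently colored vertices of its own component, i.e. its out-neighbors in
`G`. A vertex of `X` hangs directly from the root, so all differently colored vertices are its
best matches: those in `X` are its out-neighbors in `G`, the others are the added arcs.
-/

namespace PhyloTree

variable {V M : Type}

lemma mem_lcaSet_right (T : PhyloTree V) (x y : V) : y ∈ T.lcaSet x y :=
  Set.mem_sInter.2 fun _ hp => hp.2.2

lemma singleton_compat (v : V) (q : Set V) : {v} ⊆ q ∨ q ⊆ {v} ∨ {v} ∩ q = ∅ := by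
  by_cases hv : v ∈ q
  · exact Or.inl (Set.singleton_subset_iff.2 hv)
  · exact Or.inr (Or.inr (Set.singleton_inter_eq_empty.2 hv))

def ofPairwiseDisjoint [Nonempty V] (S : Set (Set V)) (hS : S.PairwiseDisjoint id)
    (hne : ∀ p ∈ S, p.Nonempty) : PhyloTree V where
  clusters := insert Set.univ (S ∪ Set.range singleton)
  compat := by
    rintro p (rfl | hp | ⟨v, rfl⟩) q hq
    · exact Or.inr (Or.inl (Set.subset_univ q))
    · rcases hq with rfl | hq | ⟨v, rfl⟩
      · exact Or.inl (Set.subset_univ p)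
      · by_cases hpq : p = q
        · exact Or.inl hpq.le
        · exact Or.inr (Or.inr (Set.disjoint_iff_inter_eq_empty.1 (hS hp hq hpq)))
      · rcases singleton_compat v p with h | h | h
        · exact Or.inr (Or.inl h)
        · exact Or.inl h
        · exact Or.inr (Or.inr (Set.inter_comm p {v} ▸ h))
    · exact singleton_compat v q
  singleton_mem v := Or.inr (Or.inr ⟨v, rfl⟩)
  univ_mem := Or.inl rfl
  nonempty_mem := by
    rintro p (rfl | hp | ⟨v, rfl⟩)
    · exact Set.univ_nonempty
    · exact hne p hp
    · exact Set.singleton_nonempty v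

section ofPairwiseDisjoint

variable [Nonempty V] {S : Set (Set V)} {hS : S.PairwiseDisjoint id}
  {hne : ∀ p ∈ S, p.Nonempty} {x y : V}

lemma eq_univ_or_mem_of_mem_clusters_ofPairwiseDisjoint {q : Set V}
    (hq : q ∈ (ofPairwiseDisjoint S hS hne).clusters) (hx : x ∈ q) (hy : y ∈ q)
    (hxy : x ≠ y) : q = Set.univ ∨ q ∈ S := by
  rcases hq with rfl | hq | ⟨v, rfl⟩
  · exact Or.inl rfl
  · exact Or.inr hq
  · exact absurd (hx.trans hy.symm) hxy

lemma lcaSet_ofPairwiseDisjoint_eq_univ (hx : ∀ p ∈ S, x ∉ p) (hxy : x ≠ y) :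
    (ofPairwiseDisjoint S hS hne).lcaSet x y = Set.univ := by
  refine Set.univ_subset_iff.1 (Set.subset_sInter ?_)
  rintro q ⟨hq, hxq, hyq⟩
  rcases eq_univ_or_mem_of_mem_clusters_ofPairwiseDisjoint hq hxq hyq hxy with rfl | hqS
  · exact le_rfl
  · exact absurd hxq (hx q hqS)

lemma subset_lcaSet_ofPairwiseDisjoint {p : Set V} (hp : p ∈ S) (hx : x ∈ p) (hxy : x ≠ y) :
    p ⊆ (ofPairwiseDisjoint S hS hne).lcaSet x y := by
  refine Set.subset_sInter ?_
  rintro q ⟨hq, hxq, hyq⟩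
  rcases eq_univ_or_mem_of_mem_clusters_ofPairwiseDisjoint hq hxq hyq hxy with rfl | hqS
  · exact Set.subset_univ p
  · exact (hS.elim_set hp hqS x hx hxq).le

lemma lcaSet_ofPairwiseDisjoint_eq {p : Set V} (hp : p ∈ S) (hx : x ∈ p) (hy : y ∈ p)
    (hxy : x ≠ y) : (ofPairwiseDisjoint S hS hne).lcaSet x y = p := by
  have hp' : p ∈ {q | q ∈ (ofPairwiseDisjoint S hS hne).clusters ∧ x ∈ q ∧ y ∈ q} :=
    ⟨Or.inr (Or.inl hp), hx, hy⟩
  exact (Set.sInter_subset_of_mem hp').antisymm (subset_lcaSet_ofPairwiseDisjoint hp hx hxy)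

lemma bestMatch_ofPairwiseDisjoint_iff_of_forall_not_mem (σ : V → M)
    (hx : ∀ p ∈ S, x ∉ p) :
    (ofPairwiseDisjoint S hS hne).BestMatch σ x y ↔ σ x ≠ σ y := by
  refine ⟨And.left, fun hxy => ⟨hxy, fun y' hy' => ?_⟩⟩
  rw [lcaSet_ofPairwiseDisjoint_eq_univ hx (ne_of_apply_ne σ hxy),
    lcaSet_ofPairwiseDisjoint_eq_univ hx (ne_of_apply_ne σ (hy' ▸ hxy))]

lemma bestMatch_ofPairwiseDisjoint_iff_of_mem (σ : V → M) {p : Set V} (hp : p ∈ S)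
    (hx : x ∈ p) (hcol : ∀ m, m ≠ σ x → ∃ y ∈ p, σ y = m) :
    (ofPairwiseDisjoint S hS hne).BestMatch σ x y ↔ σ x ≠ σ y ∧ y ∈ p := by
  constructor
  · rintro ⟨hxy, hmin⟩
    obtain ⟨y', hy'p, hy'⟩ := hcol (σ y) hxy.symm
    refine ⟨hxy, ?_⟩
    rw [← lcaSet_ofPairwiseDisjoint_eq hp hx hy'p (ne_of_apply_ne σ (hy' ▸ hxy)) (hne := hne)]
    exact hmin y' hy' (mem_lcaSet_right _ x y)
  · rintro ⟨hxy, hyp⟩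
    refine ⟨hxy, fun y' hy' => ?_⟩
    rw [lcaSet_ofPairwiseDisjoint_eq hp hx hyp (ne_of_apply_ne σ hxy)]
    exact subset_lcaSet_ofPairwiseDisjoint hp hx (ne_of_apply_ne σ (hy' ▸ hxy))

end ofPairwiseDisjoint

end PhyloTree

section Components

variable {G : V → V → Prop} {u v w : V}

lemma mem_component_self (G : V → V → Prop) (u : V) : u ∈ component G u :=
  Relation.ReflTransGen.refl

lemma mem_component_of_adj (h : G u v) : v ∈ component G u :=
  Relation.ReflTransGen.single (Or.inl h)

lemma mem_component_comm (h : v ∈ component G u) : u ∈ component G v :=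
  haveI : Std.Symm fun u v => G u v ∨ G v u := ⟨fun _ _ h => h.symm⟩
  Std.Symm.symm _ _ h

lemma mem_component_trans (huv : v ∈ component G u) (hvw : w ∈ component G v) :
    w ∈ component G u :=
  Relation.ReflTransGen.trans huv hvw

lemma component_eq_of_mem (h : v ∈ component G u) : component G v = component G u :=
  Set.ext fun _ => ⟨mem_component_trans h, mem_component_trans (mem_component_comm h)⟩

lemma pairwiseDisjoint_range_component (G : V → V → Prop) :
    (Set.range (component G)).PairwiseDisjoint id := by
  rintro _ ⟨u, rfl⟩ _ ⟨v, rfl⟩ huv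
  exact Set.disjoint_left.2 fun w hu hv =>
    huv ((component_eq_of_mem hu).symm.trans (component_eq_of_mem hv))

lemma IsBiClique.exists_color {σ : V → Bool} {C : Set V} (h : IsBiClique G σ C) (b : Bool) :
    ∃ y ∈ C, σ y = b := by
  obtain ⟨⟨s, t, hst, himg⟩, -⟩ := h
  have hb : b ∈ σ '' C := by
    rw [himg]
    cases b <;> cases s <;> cases t <;> simp_all
  exact hb

lemma IsBiclusterGraph.adj_iff {σ : V → M} (h : IsBiclusterGraph G σ) :
    G u v ↔ v ∈ component G u ∧ σ u ≠ σ v :=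
  ⟨fun huv => ⟨mem_component_of_adj huv,
      ((h u).2 u (mem_component_self G u) v (mem_component_of_adj huv)).1 huv⟩,
    fun ⟨hv, hne⟩ => ((h u).2 u (mem_component_self G u) v hv).2 hne⟩

end Components

open PhyloTree in
theorem bicluster_plus_component_arcs_isBMG_general
    (G : V → V → Prop) (σ : V → Bool)
    (hbc : IsBiclusterGraph G σ)
    (x0 : V) :
    IsBMG
      (fun u v => G u v ∨
        (u ∈ component G x0 ∧ v ∉ component G x0 ∧ σ u ≠ σ v)) σ := by
  have : Nonempty V := ⟨x0⟩
  refine ⟨ofPairwiseDisjoint (component G '' (component G x0)ᶜ)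
    ((pairwiseDisjoint_range_component G).subset (Set.image_subset_range _ _))
    (by rintro _ ⟨u, -, rfl⟩; exact ⟨u, mem_component_self G u⟩), fun x y => ?_⟩
  beta_reduce
  by_cases hx : x ∈ component G x0
  · have hfree : ∀ p ∈ component G '' (component G x0)ᶜ, x ∉ p := by
      rintro _ ⟨u, hu, rfl⟩ hxu
      exact hu (mem_component_trans hx (mem_component_comm hxu))
    rw [bestMatch_ofPairwiseDisjoint_iff_of_forall_not_mem σ hfree, hbc.adj_iff,
      component_eq_of_mem hx]
    by_cases hy : y ∈ component G x0 <;> simp [hx, hy]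
  · rw [bestMatch_ofPairwiseDisjoint_iff_of_mem σ (Set.mem_image_of_mem _ hx)
      (mem_component_self G x) (fun m _ => (hbc x).exists_color m), hbc.adj_iff]
    simp [hx, and_comm]

/-- Adding to a 2-colored bi-cluster graph with at least two
connected components all arcs from one fixed component `X` (the component of
`x0`) to all differently colored vertices of the other components yields a
BMG. -/
theorem bicluster_plus_component_arcs_isBMG [Fintype V]
    (G : V → V → Prop) (σ : V → Bool)
    (hsurj : Function.Surjective σ)
    (hbc : IsBiclusterGraph G σ)
    (x0 : V) (htwo : ∃ v : V, v ∉ component G x0) :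
    IsBMG
      (fun u v => G u v ∨
        (u ∈ component G x0 ∧ v ∉ component G x0 ∧ σ u ≠ σ v)) σ :=
  bicluster_plus_component_arcs_isBMG_general G σ hbc x0
end
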